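/- Let n ≥ 1 and let s, t ∈ W_2 be words such that Pat(s, Λ, n) and Pat(t, Λ, n) are both defined and equal. Then the prefixes s_1⋯s_{n−1} and t_1⋯t_{n−1} agree in all but at most one position. -/

import Mathlib

/-- Infinite words over the alphabet `{0,…,k-1}`; `s i` is the letter `s_{i+1}`. -/
abbrev Word (k : ℕ) := ℕ → Fin k

/-- The number of indices `i < j` (0-indexed) with `σ_{s_i} = −` (`false` encodes `−`). -/
def negCount {k : ℕ} (σ : Fin k → Bool) (s : Word k) (j : ℕ) : ℕ :=
  ((Finset.range j).filter (fun i => σ (s i) = false)).card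

/-- The strict order `s ≺_σ t` on infinite words. -/
def sLt {k : ℕ} (σ : Fin k → Bool) (s t : Word k) : Prop :=
  ∃ j : ℕ, (∀ i < j, s i = t i) ∧ s j ≠ t j ∧
    ((Even (negCount σ s j) ∧ s j < t j) ∨ (¬ Even (negCount σ s j) ∧ t j < s j))

/-- `shiftW s i` is the word `s_{[i+1,∞)}`, i.e. the `i`-th iterate of the shift. -/
def shiftW {k : ℕ} (s : Word k) (i : ℕ) : Word k := fun m => s (m + i)

/-- `Pat(s, Σ_σ, n) = π`: the first `n` shifts of `s` are ordered according to `π`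
(0-indexed one-line notation). -/
def PatIs {k n : ℕ} (σ : Fin k → Bool) (s : Word k) (π : Equiv.Perm (Fin n)) : Prop :=
  ∀ i j : Fin n, π i < π j ↔ sLt σ (shiftW s i) (shiftW s j)

/-- The allowed patterns of length `n` of the signed shift `Σ_σ`. -/
def Allowed {k : ℕ} (σ : Fin k → Bool) (n : ℕ) : Set (Equiv.Perm (Fin n)) :=
  {π | ∃ s : Word k, PatIs σ s π}

/-- The starred cycle `ĥπ*` of `π`, as a partial map on 0-indexed positions:
position `π_i` carries value `π_{i+1}`, and position `π_n` carries `*` (i.e. `none`). -/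
def hatStar {n : ℕ} (π : Equiv.Perm (Fin n)) (p : Fin n) : Option (Fin n) :=
  if h : (π.symm p : ℕ) = n - 1 then none
  else some (π ⟨(π.symm p : ℕ) + 1, by have := (π.symm p).isLt; omega⟩)

/-- `e : ℕ → ℕ` (used on `{0,…,k}`) is a `*`-`σ`-segmentation of `ĥπ*`. -/
def IsStarSeg {k n : ℕ} (σ : Fin k → Bool) (π : Equiv.Perm (Fin n)) (e : ℕ → ℕ) : Prop :=
  e 0 = 0 ∧ e k = n ∧ Monotone e ∧
  -- (a) the non-`*` entries in the `t`-th block are increasing (σ_t = +) or decreasing (σ_t = −)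
  (∀ t : Fin k, ∀ p q : Fin n, e t ≤ (p : ℕ) → (q : ℕ) < e ((t : ℕ) + 1) → (p : ℕ) < (q : ℕ) →
    ∀ v w : Fin n, hatStar π p = some v → hatStar π q = some w →
      (if σ t = true then v < w else w < v)) ∧
  -- (b)
  (∀ (hk : 0 < k) (h0 : 0 < n) (h1 : 1 < n), σ ⟨0, hk⟩ = true →
     hatStar π ⟨0, h0⟩ = none → hatStar π ⟨1, h1⟩ = some ⟨0, h0⟩ → e 1 ≤ 1) ∧
  -- (c)
  (∀ (hk : k - 1 < k) (h0 : n - 2 < n) (h1 : n - 1 < n), σ ⟨k - 1, hk⟩ = true →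
     hatStar π ⟨n - 2, h0⟩ = some ⟨n - 1, h1⟩ → hatStar π ⟨n - 1, h1⟩ = none →
     n - 1 ≤ e (k - 1)) ∧
  -- (d)
  (∀ (hk0 : 0 < k) (hk1 : k - 1 < k) (h0 : 0 < n) (h1 : n - 2 < n) (h2 : n - 1 < n),
     σ ⟨0, hk0⟩ = false → σ ⟨k - 1, hk1⟩ = false →
     hatStar π ⟨0, h0⟩ = some ⟨n - 1, h2⟩ →
     hatStar π ⟨n - 2, h1⟩ = some ⟨0, h0⟩ → hatStar π ⟨n - 1, h2⟩ = none →
     e 1 = 0 ∨ n - 1 ≤ e (k - 1)) ∧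
  -- (e)
  (∀ (hk0 : 0 < k) (hk1 : k - 1 < k) (h0 : 0 < n) (h1 : 1 < n) (h2 : n - 1 < n),
     σ ⟨0, hk0⟩ = false → σ ⟨k - 1, hk1⟩ = false →
     hatStar π ⟨n - 1, h2⟩ = some ⟨0, h0⟩ →
     hatStar π ⟨0, h0⟩ = none → hatStar π ⟨1, h1⟩ = some ⟨n - 1, h2⟩ →
     e (k - 1) = n ∨ e 1 ≤ 1)

/-- `ĥπ* ∈ C^{σ,*}`: some `*`-`σ`-segmentation exists. -/
def InCstar {k n : ℕ} (σ : Fin k → Bool) (π : Equiv.Perm (Fin n)) : Prop :=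
  ∃ e : ℕ → ℕ, IsStarSeg σ π e

/-- The bad configuration forbidden by condition `(†)`: an integer `b ≥ 1` with `n − 2b ≥ 1`
such that `π_n` lies strictly between `π_{n−2b}` and `π_{n−b}`, and for all `1 ≤ i ≤ b` and
`0 ≤ t ≤ k−1`, `e_t < π_{n−b−i} ≤ e_{t+1}` iff `e_t < π_{n−i} ≤ e_{t+1}`.
(Values of `π` are 0-indexed, so `e_t < v ≤ e_{t+1}` becomes `e t ≤ v ∧ v < e (t+1)`.) -/
def DaggerBad (k : ℕ) {n : ℕ} (π : Equiv.Perm (Fin n)) (e : ℕ → ℕ) (b : ℕ) : Prop :=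
  ∃ (_ : 1 ≤ b) (hbn : 2 * b < n),
    (((π ⟨n - 1 - 2 * b, by omega⟩ : ℕ) < (π ⟨n - 1, by omega⟩ : ℕ) ∧
      (π ⟨n - 1, by omega⟩ : ℕ) < (π ⟨n - 1 - b, by omega⟩ : ℕ)) ∨
     ((π ⟨n - 1 - b, by omega⟩ : ℕ) < (π ⟨n - 1, by omega⟩ : ℕ) ∧
      (π ⟨n - 1, by omega⟩ : ℕ) < (π ⟨n - 1 - 2 * b, by omega⟩ : ℕ))) ∧
    (∀ i, 1 ≤ i → i ≤ b → ∀ t, t < k →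
      ((e t ≤ (π ⟨n - 1 - b - i, by omega⟩ : ℕ) ∧ (π ⟨n - 1 - b - i, by omega⟩ : ℕ) < e (t + 1)) ↔
       (e t ≤ (π ⟨n - 1 - i, by omega⟩ : ℕ) ∧ (π ⟨n - 1 - i, by omega⟩ : ℕ) < e (t + 1))))

/-- Condition `(†)`. -/
def Dagger {k n : ℕ} (σ : Fin k → Bool) (π : Equiv.Perm (Fin n)) : Prop :=
  ∃ e : ℕ → ℕ, IsStarSeg σ π e ∧ ∀ b : ℕ, ¬ DaggerBad k π e b

/-- The letter of the `π`-monotone word assigned to the (0-indexed) value `v`: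
the unique `t` with `e t ≤ v < e (t+1)` when `e` is a segmentation. -/
noncomputable def segLetter {k : ℕ} (hk : 0 < k) (e : ℕ → ℕ) (v : ℕ) : Fin k :=
  ⟨min (k - 1) (sInf {t : ℕ | v < e (t + 1)}),
   by have := Nat.min_le_left (k - 1) (sInf {t : ℕ | v < e (t + 1)}); omega⟩

/-- The `π`-monotone word `s_1 ⋯ s_n` associated to a segmentation `e`. -/
noncomputable def monoWord {k n : ℕ} (hk : 0 < k) (e : ℕ → ℕ) (π : Equiv.Perm (Fin n)) : List (Fin k) :=
  (List.finRange n).map (fun i => segLetter hk e (π i))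

/-- Prepend a finite word to an infinite word. -/
def appendW {k : ℕ} (l : List (Fin k)) (s : Word k) : Word k :=
  fun i => if h : i < l.length then l.get ⟨i, h⟩ else s (i - l.length)

/-- `n(q)`: number of negative letters of a finite word `q`. -/
def negCountL {k : ℕ} (σ : Fin k → Bool) (q : List (Fin k)) : ℕ :=
  (q.filter (fun c => σ c = false)).length

/-- The least word `w_σ` of `(W_k, ≺_σ)`. -/
def wMin {k : ℕ} (hk : 0 < k) (σ : Fin k → Bool) : Word k :=
  if σ ⟨0, hk⟩ = true then fun _ => ⟨0, hk⟩
  else if σ ⟨k - 1, by omega⟩ = true then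
    fun i => if i = 0 then ⟨0, hk⟩ else ⟨k - 1, by omega⟩
  else fun i => if i % 2 = 0 then ⟨0, hk⟩ else ⟨k - 1, by omega⟩

/-- The greatest word `W_σ` of `(W_k, ≺_σ)`. -/
def wMax {k : ℕ} (hk : 0 < k) (σ : Fin k → Bool) : Word k :=
  if σ ⟨k - 1, by omega⟩ = true then fun _ => ⟨k - 1, by omega⟩
  else if σ ⟨0, hk⟩ = true then
    fun i => if i = 0 then ⟨k - 1, by omega⟩ else ⟨0, hk⟩
  else fun i => if i % 2 = 0 then ⟨k - 1, by omega⟩ else ⟨0, hk⟩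

/-- A finite word is primitive if it is not a proper power of a shorter word. -/
def PrimitiveW {k : ℕ} (q : List (Fin k)) : Prop :=
  ¬ ∃ (r : List (Fin k)) (m : ℕ), r.length < q.length ∧ 1 < m ∧
      q = (List.replicate m r).flatten

/-- The word `s^{(1)}` (with `useMin = true`) resp. `s^{(2)}` (with `useMin = false`)
built from the `π`-monotone word of a segmentation `e` and a 0-indexed position `x0`:
`u p^{n−1}` followed by `w_σ`/`W_σ` according to the parities of `n` and `n(p)`. -/
noncomputable def buildWord {k n : ℕ} (hk : 0 < k) (σ : Fin k → Bool) (e : ℕ → ℕ)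
    (π : Equiv.Perm (Fin n)) (x0 : ℕ) (useMin : Bool) : Word k :=
  let w := monoWord hk e π
  let p := (w.take (n - 1)).drop x0
  let tail :=
    if n % 2 = 0 ∨ negCountL σ p % 2 = 0 then
      (if useMin then wMin hk σ else wMax hk σ)
    else
      (if useMin then wMax hk σ else wMin hk σ)
  appendW (w.take x0 ++ (List.replicate (n - 1) p).flatten) tail

/-- `ψ_k(t)`: the number of primitive words of length `t` over a `k`-letter alphabet. -/
noncomputable def psiW (k t : ℕ) : ℕ :=
  Set.ncard {q : List (Fin k) | q.length = t ∧ PrimitiveW q}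

/-- `a(n,k) = Σ_{t=1}^{n−1} ψ_k(t)·k^{n−t−1}`. -/
noncomputable def aNum (n k : ℕ) : ℕ :=
  ∑ t ∈ Finset.Icc 1 (n - 1), psiW k t * k ^ (n - t - 1)

/-- `I_{n,k} = a(n,k) + (k−2)k^{n−2}`, the number of allowed intervals of the `k`-shift. -/
noncomputable def INum (n k : ℕ) : ℕ := aNum n k + (k - 2) * k ^ (n - 2)

/-- The all-`+` signature, giving the `k`-shift. -/
def allPlus (k : ℕ) : Fin k → Bool := fun _ => true

/-- `b(n,2) = |A_n(Σ_2)|` and `b(n,i) = |A_n(Σ_i) \ A_n(Σ_{i−1})|` for `i ≥ 3`. -/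
noncomputable def bNum (n i : ℕ) : ℕ :=
  if i ≤ 2 then (Allowed (allPlus 2) n).ncard
  else ((Allowed (allPlus i) n) \ (Allowed (allPlus (i - 1)) n)).ncard

/-! The signed order compares two words at their first difference, so words that start with
the same letter compare as their shifts do, up to a reversal when that letter is negative.
For two words with the same pattern this forces: a letter inversion (`s i < s j` but
`t j < t i`) is impossible, and a pair of positions where both words repeat a letter must
repeat letters of the same sign. For the tent map, where `0` is positive and `1` is negative,
two mismatches `s i ≠ t i`, `s j ≠ t j` with `i ≠ j` fall into one of these two cases. -/

section SignedShift

variable {k : ℕ} {σ : Fin k → Bool}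

@[simp]
lemma shiftW_apply_zero (s : Word k) (i : ℕ) : shiftW s i 0 = s i := by
  simp [shiftW]

lemma shiftW_shiftW_one (s : Word k) (i : ℕ) : shiftW (shiftW s i) 1 = shiftW s (i + 1) := by
  funext m
  simp only [shiftW]
  congr 1
  omega

lemma negCount_congr {u v : Word k} {j : ℕ} (h : ∀ i < j, u i = v i) :
    negCount σ u j = negCount σ v j := by
  unfold negCount
  congr 1
  exact Finset.filter_congr fun i hi => by rw [h i (Finset.mem_range.mp hi)]

lemma negCount_succ (u : Word k) (j : ℕ) :
    negCount σ u (j + 1) = negCount σ (shiftW u 1) j + if σ (u 0) = false then 1 else 0 := by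
  simp only [negCount, Finset.card_filter, Finset.sum_range_succ']
  rfl

lemma sLt_of_apply_zero_lt {u v : Word k} (h : u 0 < v 0) : sLt σ u v :=
  ⟨0, fun _ hi => absurd hi (Nat.not_lt_zero _), h.ne, Or.inl ⟨by simp [negCount], h⟩⟩

lemma sLt_shiftW_of_apply_zero_eq_of_pos {u v : Word k} (h0 : u 0 = v 0)
    (hσ : σ (u 0) = true) (h : sLt σ u v) : sLt σ (shiftW u 1) (shiftW v 1) := by
  obtain ⟨_ | j, hpre, hne, hor⟩ := h
  · exact absurd h0 hne
  refine ⟨j, fun i hi => hpre (i + 1) (by omega), hne, ?_⟩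
  rwa [negCount_succ, hσ, if_neg Bool.true_eq_false.mp, add_zero] at hor

lemma sLt_shiftW_of_apply_zero_eq_of_neg {u v : Word k} (h0 : u 0 = v 0)
    (hσ : σ (u 0) = false) (h : sLt σ u v) : sLt σ (shiftW v 1) (shiftW u 1) := by
  obtain ⟨_ | j, hpre, hne, hor⟩ := h
  · exact absurd h0 hne
  have hcount : negCount σ (shiftW v 1) j = negCount σ (shiftW u 1) j :=
    negCount_congr fun i hi => (hpre (i + 1) (by omega)).symm
  refine ⟨j, fun i hi => (hpre (i + 1) (by omega)).symm, Ne.symm hne, ?_⟩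
  rw [negCount_succ, hσ, if_pos rfl] at hor
  rw [hcount]
  rcases hor with ⟨he, hlt⟩ | ⟨ho, hlt⟩
  · exact Or.inr ⟨Nat.even_add_one.mp he, hlt⟩
  · exact Or.inl ⟨not_not.mp (mt Nat.even_add_one.mpr ho), hlt⟩

end SignedShift

namespace PatIs

variable {k n : ℕ} {σ : Fin k → Bool} {s t : Word k} {π : Equiv.Perm (Fin n)}

lemma lt_of_apply_lt (hs : PatIs σ s π) {i j : Fin n} (h : s i < s j) : π i < π j :=
  (hs i j).2 (sLt_of_apply_zero_lt (by simpa using h))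

lemma apply_le_of_apply_lt (hs : PatIs σ s π) (ht : PatIs σ t π) {i j : Fin n}
    (h : s i < s j) : t i ≤ t j :=
  le_of_not_gt fun h' => lt_asymm (hs.lt_of_apply_lt h) (ht.lt_of_apply_lt h')

lemma succ_lt_succ_iff_sign {i j : ℕ} (hs : PatIs σ s π) (hi : i + 1 < n) (hj : j + 1 < n)
    (hij : s i = s j) (h : π ⟨i, by omega⟩ < π ⟨j, by omega⟩) :
    (π ⟨i + 1, hi⟩ < π ⟨j + 1, hj⟩ ↔ σ (s i) = true) := by
  have hsh := (hs ⟨i, by omega⟩ ⟨j, by omega⟩).1 h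
  have h0 : shiftW s i 0 = shiftW s j 0 := by simpa using hij
  cases hσ : σ (s i)
  · have := sLt_shiftW_of_apply_zero_eq_of_neg h0 (by simpa using hσ) hsh
    rw [shiftW_shiftW_one, shiftW_shiftW_one, ← hs ⟨j + 1, hj⟩ ⟨i + 1, hi⟩] at this
    simpa using this.le
  · have := sLt_shiftW_of_apply_zero_eq_of_pos h0 (by simpa using hσ) hsh
    rw [shiftW_shiftW_one, shiftW_shiftW_one, ← hs ⟨i + 1, hi⟩ ⟨j + 1, hj⟩] at this
    simpa using this

lemma sign_eq_of_apply_eq (hs : PatIs σ s π) (ht : PatIs σ t π) {i j : ℕ} (hi : i + 1 < n)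
    (hj : j + 1 < n) (hij : i ≠ j) (hsij : s i = s j) (htij : t i = t j) :
    σ (s i) = σ (t i) := by
  have hne : π ⟨i, by omega⟩ ≠ π ⟨j, by omega⟩ := π.injective.ne (by simpa using hij)
  rcases hne.lt_or_gt with h | h
  · rw [Bool.eq_iff_iff, ← hs.succ_lt_succ_iff_sign hi hj hsij h,
      ← ht.succ_lt_succ_iff_sign hi hj htij h]
  · rw [hsij, htij, Bool.eq_iff_iff, ← hs.succ_lt_succ_iff_sign hj hi hsij.symm h,
      ← ht.succ_lt_succ_iff_sign hj hi htij.symm h]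

end PatIs

lemma tent_not_two_mismatches {n : ℕ} {s t : Word 2} {π : Equiv.Perm (Fin n)}
    (hs : PatIs ![true, false] s π) (ht : PatIs ![true, false] t π) {i j : ℕ}
    (hi : i + 1 < n) (hj : j + 1 < n) (hij : i ≠ j) (hsti : s i ≠ t i) (hstj : s j ≠ t j) :
    False := by
  have hcases : ∀ a b c d : Fin 2, a ≠ c → b ≠ d →
      (a < b ∧ d < c) ∨ (b < a ∧ c < d) ∨ (a = b ∧ c = d ∧ ![true, false] a ≠ ![true, false] c) := by
    decide
  rcases hcases _ _ _ _ hsti hstj with ⟨hs', ht'⟩ | ⟨hs', ht'⟩ | ⟨hsij, htij, hσ⟩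
  · exact absurd (hs.apply_le_of_apply_lt ht (i := ⟨i, by omega⟩) (j := ⟨j, by omega⟩) hs')
      (not_le.2 ht')
  · exact absurd (hs.apply_le_of_apply_lt ht (i := ⟨j, by omega⟩) (j := ⟨i, by omega⟩) hs')
      (not_le.2 ht')
  · exact hσ (hs.sign_eq_of_apply_eq ht hi hj hij hsij htij)

theorem tent_same_pattern_prefixes_general (n : ℕ) (s t : Word 2)
    (π : Equiv.Perm (Fin n))
    (hs : PatIs (![true, false]) s π) (ht : PatIs (![true, false]) t π) :
    ∃ j : ℕ, ∀ i : ℕ, i < n - 1 → i ≠ j → s i = t i := by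
  by_cases hex : ∃ j < n - 1, s j ≠ t j
  · obtain ⟨j, hj, hstj⟩ := hex
    exact ⟨j, fun i hi hij => by_contra fun hsti =>
      tent_not_two_mismatches hs ht (by omega) (by omega) hij hsti hstj⟩
  · push Not at hex
    exact ⟨0, fun i hi _ => hex i hi⟩

theorem tent_same_pattern_prefixes (n : ℕ) (hn : 1 ≤ n) (s t : Word 2)
    (π : Equiv.Perm (Fin n))
    (hs : PatIs (![true, false]) s π) (ht : PatIs (![true, false]) t π) :
    ∃ j : ℕ, ∀ i : ℕ, i < n - 1 → i ≠ j → s i = t i :=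
  tent_same_pattern_prefixes_general n s t π hs ht
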